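/- Let t and c be classifiers on a finite universe X of n ≥ 2 individuals, let δ ≥ 0, and suppose c is δ-faithful to t and c is δ-balanced. Then d_H(c,t) ≤ √(2δ)·n or d_H(c,f(t)) ≤ √(2δ)·n, where d_H denotes Hamming distance. -/

import Mathlib

open Finset

namespace Oracle

variable {n : ℕ}

def zeros (c : Fin n → Bool) : Finset (Fin n) := Finset.univ.filter (fun i => c i = false)

def ones (c : Fin n → Bool) : Finset (Fin n) := Finset.univ.filter (fun i => c i = true)

def flip (c : Fin n → Bool) : Fin n → Bool := fun i => !(c i)

/-- Transportation cost `C(t → c)`: the fraction, among all `n.choose 2` unordered pairs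
of distinct individuals, of pairs treated the same by `t` but differently by `c`.
Unordered pairs `{i,j}` with `i ≠ j` are represented as ordered pairs with `p.1 < p.2`. -/
noncomputable def cost (t c : Fin n → Bool) : ℝ :=
  ((Finset.univ.filter
      (fun p : Fin n × Fin n => p.1 < p.2 ∧ t p.1 = t p.2 ∧ c p.1 ≠ c p.2)).card : ℝ)
    / (n.choose 2 : ℝ)

/-- A classifier is `δ`-balanced if `|c⁰| > √(2δ)·n` and `|c¹| > √(2δ)·n`. -/
def balanced (δ : ℝ) (c : Fin n → Bool) : Prop :=
  Real.sqrt (2*δ) * n < ((zeros c).card : ℝ) ∧ Real.sqrt (2*δ) * n < ((ones c).card : ℝ)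

/-- Hamming distance between classifiers. -/
def hamming (u v : Fin n → Bool) : ℕ := (Finset.univ.filter (fun i => u i ≠ v i)).card


/-!
Split the individuals into the four cells `c = x, t = y` with sizes `z₀, z₁` (`c = 0`) and
`o₀, o₁` (`c = 1`). Every pair with one individual in cell `(0, y)` and the other in `(1, y)`
is moved by `c` although `t` keeps it together, so faithfulness gives
`z₀ o₀ + z₁ o₁ ≤ δ·binom(n,2) ≤ (√(2δ)·n/2)²`. If both Hamming distances were too large, the
four sums `z₀ + z₁`, `z₁ + o₀`, `o₀ + o₁`, `o₁ + z₀` (the two class sizes of `c` and the two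
Hamming distances) would all exceed `2m` with `m = √(2δ)·n/2`; the cells larger than `m` then
cover this 4-cycle, so they contain `{z₀, o₀}` or `{z₁, o₁}`, forcing `z₀ o₀ + z₁ o₁ > m²`.
-/

theorem sq_lt_mul_add_mul_of_two_mul_lt_add {a b c d m : ℝ} (ha : 0 ≤ a) (hb : 0 ≤ b)
    (hc : 0 ≤ c) (hd : 0 ≤ d) (hm : 0 ≤ m)
    (hab : 2 * m < a + b) (hbc : 2 * m < b + c) (hcd : 2 * m < c + d) (hda : 2 * m < d + a) :
    m ^ 2 < a * c + b * d := by
  have hcover : (m < a ∧ m < c) ∨ (m < b ∧ m < d) := by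
    by_contra! h
    rcases le_or_gt a m with ham | ham
    · linarith [h.2 (by linarith)]
    · have hcm := h.1 ham
      linarith [h.2 (by linarith)]
  rcases hcover with ⟨h₁, h₂⟩ | ⟨h₁, h₂⟩
  · nlinarith [mul_lt_mul'' h₁ h₂ hm hm, mul_nonneg hb hd]
  · nlinarith [mul_lt_mul'' h₁ h₂ hm hm, mul_nonneg ha hc]

def cell (c t : Fin n → Bool) (x y : Bool) : Finset (Fin n) :=
  univ.filter (fun i => c i = x ∧ t i = y)

section Cells

variable (c t : Fin n → Bool)

theorem card_zeros_eq : #(zeros c) = #(cell c t false false) + #(cell c t false true) := by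
  simp only [zeros, cell, card_filter, ← sum_add_distrib]
  refine sum_congr rfl fun i _ => ?_
  cases c i <;> cases t i <;> rfl

theorem card_ones_eq : #(ones c) = #(cell c t true false) + #(cell c t true true) := by
  simp only [ones, cell, card_filter, ← sum_add_distrib]
  refine sum_congr rfl fun i _ => ?_
  cases c i <;> cases t i <;> rfl

theorem hamming_eq : hamming c t = #(cell c t false true) + #(cell c t true false) := by
  simp only [hamming, cell, card_filter, ← sum_add_distrib]
  refine sum_congr rfl fun i _ => ?_
  cases c i <;> cases t i <;> rfl

theorem cell_flip (x y : Bool) : cell c (flip t) x y = cell c t x (!y) := by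
  ext i
  simp [cell, Oracle.flip, Bool.not_eq_eq_eq_not]

theorem hamming_flip_eq :
    hamming c (flip t) = #(cell c t false false) + #(cell c t true true) := by
  rw [hamming_eq, cell_flip, cell_flip]
  rfl

theorem card_crossPairs_eq :
    #{p : Fin n × Fin n | c p.1 = false ∧ c p.2 = true ∧ t p.1 = t p.2} =
      #(cell c t false false) * #(cell c t true false) +
        #(cell c t false true) * #(cell c t true true) := by
  have hsplit : ({p : Fin n × Fin n | c p.1 = false ∧ c p.2 = true ∧ t p.1 = t p.2} : Finset _) =
      cell c t false false ×ˢ cell c t true false ∪ cell c t false true ×ˢ cell c t true true := by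
    ext ⟨i, j⟩
    simp only [cell, mem_filter, mem_univ, true_and, mem_union, mem_product]
    cases c i <;> cases t i <;> cases c j <;> cases t j <;> simp
  have hdisj : Disjoint (cell c t false false ×ˢ cell c t true false)
      (cell c t false true ×ˢ cell c t true true) :=
    disjoint_left.mpr fun p hp hp' => by
      simp only [cell, mem_product, mem_filter, mem_univ, true_and] at hp hp'
      simp [hp.1.2] at hp'
  rw [hsplit, card_union_of_disjoint hdisj, card_product, card_product]

theorem card_crossPairs_le :
    #{p : Fin n × Fin n | c p.1 = false ∧ c p.2 = true ∧ t p.1 = t p.2} ≤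
      #{p : Fin n × Fin n | p.1 < p.2 ∧ t p.1 = t p.2 ∧ c p.1 ≠ c p.2} := by
  refine card_le_card_of_injOn (fun p => if p.1 < p.2 then p else p.swap) ?_ ?_
  · rintro ⟨i, j⟩ hp
    simp only [mem_coe, mem_filter, mem_univ, true_and] at hp ⊢
    obtain ⟨hi, hj, hij⟩ := hp
    have hne : i ≠ j := by rintro rfl; simp_all
    rcases lt_or_gt_of_ne hne with h | h
    · simp [h, hi, hj, hij]
    · simp [lt_asymm h, h, hi, hj, hij.symm]
  · rintro ⟨i, j⟩ hp ⟨i', j'⟩ hp' heq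
    simp only [mem_coe, mem_filter, mem_univ, true_and] at hp hp'
    dsimp only at heq
    split_ifs at heq <;> simp_all [Prod.ext_iff]

end Cells

theorem card_pairs_le_of_cost_le (hn : 2 ≤ n) {δ : ℝ} {t c : Fin n → Bool}
    (h : cost t c ≤ δ) :
    (#{p : Fin n × Fin n | p.1 < p.2 ∧ t p.1 = t p.2 ∧ c p.1 ≠ c p.2} : ℝ) ≤
      δ * n.choose 2 := by
  rwa [cost, div_le_iff₀ (by exact_mod_cast Nat.choose_pos hn)] at h

theorem mul_choose_two_le_sq {δ : ℝ} (hδ : 0 ≤ δ) (n : ℕ) :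
    δ * n.choose 2 ≤ (√(2 * δ) * n / 2) ^ 2 := by
  rw [Nat.cast_choose_two, div_pow, mul_pow, Real.sq_sqrt (by positivity)]
  nlinarith [mul_nonneg hδ n.cast_nonneg]

/-- If `c` is `δ`-faithful to `t` and `δ`-balanced, then `c` is within Hamming distance
`√(2δ)·n` of `t` or of `flip t`. -/
theorem faithful_balanced_hamming {n : ℕ} (hn : 2 ≤ n) {δ : ℝ} (hδ : 0 ≤ δ)
    (t c : Fin n → Bool) (hfaithful : cost t c ≤ δ) (hbal : balanced δ c) :
    ((hamming c t : ℝ) ≤ Real.sqrt (2*δ) * n) ∨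
    ((hamming c (flip t) : ℝ) ≤ Real.sqrt (2*δ) * n) := by
  by_contra! hfar
  obtain ⟨hzeros, hones⟩ := hbal
  rw [card_zeros_eq c t] at hzeros
  rw [card_ones_eq c t] at hones
  rw [hamming_eq, hamming_flip_eq] at hfar
  push_cast at hzeros hones hfar
  have hcross : (√(2 * δ) * n / 2) ^ 2 <
      #{p : Fin n × Fin n | c p.1 = false ∧ c p.2 = true ∧ t p.1 = t p.2} := by
    rw [card_crossPairs_eq]
    push_cast
    exact sq_lt_mul_add_mul_of_two_mul_lt_add (by positivity) (by positivity) (by positivity)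
      (by positivity) (by positivity) (by linarith) (by linarith) (by linarith) (by linarith)
  linarith [(Nat.cast_le (α := ℝ)).mpr (card_crossPairs_le c t),
    card_pairs_le_of_cost_le hn hfaithful, mul_choose_two_le_sq hδ n]

end Oracle
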